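/- With S^Ω = S and π a truncation, define S_B = S ∩ π(P), S_T = π(S), and G = S_B^Ω ∩ π(P). Then every element of π(P) that commutes (under Ω) with all elements of S_T also commutes with all elements of G. (In the stabilizer-code language: a local operator on the truncated system that violates no bulk stabilizers and no primary boundary terms also violates no secondary boundary terms.) -/

import Mathlib

/-!
A truncated operator `c ∈ π(P)` only sees the truncated part of any `s`: the remainder
`s - π s` lies in `ker π`, which is `Ω`-orthogonal to `π(P)`. Hence commuting with `π(S)`
is the same as commuting with `S`, so `c ∈ S^Ω = S`, i.e. `c ∈ S_B`, and every element of
`G ⊆ S_B^Ω` commutes with it.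
-/

/-- `P = ⊕_{i∈I} (ℤ_d)²` with the symplectic pairing
`Ω(a,b) = Σ_i (a_i^X b_i^Z − a_i^Z b_i^X)`. -/
noncomputable def Omega {I : Type*} {d : ℕ} (a b : I →₀ ZMod d × ZMod d) : ZMod d :=
  a.sum fun i v => v.1 * (b i).2 - v.2 * (b i).1

/-- The commutant `A^Ω = {c ∈ P : Ω(c,a) = 0 for all a ∈ A}`. -/
def commutant {I : Type*} {d : ℕ} (A : Set (I →₀ ZMod d × ZMod d)) :
    Set (I →₀ ZMod d × ZMod d) :=
  {c | ∀ a ∈ A, Omega c a = 0}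

section Omega

variable {I : Type*} {d : ℕ}

lemma Omega_antisymm (a b : I →₀ ZMod d × ZMod d) : Omega a b = -Omega b a := by
  classical
  have sum_eq : ∀ x y : I →₀ ZMod d × ZMod d, x.support ⊆ a.support ∪ b.support →
      Omega x y = ∑ i ∈ a.support ∪ b.support,
      ((x i).1 * (y i).2 - (x i).2 * (y i).1) := fun x y hx =>
    Finsupp.sum_of_support_subset x hx _ (by simp)
  rw [sum_eq a b Finset.subset_union_left, sum_eq b a Finset.subset_union_right,
    ← Finset.sum_neg_distrib]
  exact Finset.sum_congr rfl fun i _ => by ring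

lemma Omega_eq_zero_comm {a b : I →₀ ZMod d × ZMod d} : Omega a b = 0 ↔ Omega b a = 0 := by
  rw [Omega_antisymm, neg_eq_zero]

lemma Omega_add_right (c a b : I →₀ ZMod d × ZMod d) :
    Omega c (a + b) = Omega c a + Omega c b := by
  unfold Omega
  rw [← Finsupp.sum_add]
  refine Finsupp.sum_congr fun i _ => ?_
  simp only [Finsupp.add_apply, Prod.fst_add, Prod.snd_add]
  ring

end Omega

section Truncation

variable {I : Type*} {d : ℕ} {π : (I →₀ ZMod d × ZMod d) →+ (I →₀ ZMod d × ZMod d)}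

lemma Omega_truncation_right (hproj : ∀ x, π (π x) = π x)
    (horth : ∀ x, π x = 0 → ∀ y ∈ Set.range π, Omega x y = 0)
    {c : I →₀ ZMod d × ZMod d} (hc : c ∈ Set.range π) (a : I →₀ ZMod d × ZMod d) :
    Omega c (π a) = Omega c a := by
  have hker : π (a - π a) = 0 := by rw [map_sub, hproj, sub_self]
  have horth_c : Omega c (a - π a) = 0 := Omega_eq_zero_comm.mp (horth _ hker c hc)
  calc Omega c (π a) = Omega c (π a + (a - π a)) := by rw [Omega_add_right, horth_c, add_zero]
    _ = Omega c a := by rw [add_sub_cancel]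

lemma mem_commutant_of_truncation_image (hproj : ∀ x, π (π x) = π x)
    (horth : ∀ x, π x = 0 → ∀ y ∈ Set.range π, Omega x y = 0)
    {A : Set (I →₀ ZMod d × ZMod d)} {c : I →₀ ZMod d × ZMod d} (hc : c ∈ Set.range π)
    (hcA : c ∈ commutant (π '' A)) : c ∈ commutant A := fun a ha =>
  Omega_truncation_right hproj horth hc a ▸ hcA _ ⟨a, ha, rfl⟩

end Truncation

/-- With `S^Ω = S` and `π` a truncation, set `S_B = S ∩ π(P)`, `S_T = π(S)`, and
`G = S_B^Ω ∩ π(P)`.  Every element of `π(P)` commuting with all of `S_T` also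
commutes with all of `G`: no primary violations implies no secondary violations. -/
theorem primary_determines_secondary {I : Type*} {d : ℕ}
    (S : AddSubgroup (I →₀ ZMod d × ZMod d))
    (hS : commutant (S : Set (I →₀ ZMod d × ZMod d)) = (S : Set (I →₀ ZMod d × ZMod d)))
    (π : (I →₀ ZMod d × ZMod d) →+ (I →₀ ZMod d × ZMod d))
    (hproj : ∀ x, π (π x) = π x)
    (horth : ∀ x, π x = 0 → ∀ y ∈ Set.range π, Omega x y = 0) :
    ∀ c ∈ Set.range π,
      (∀ t ∈ π '' (S : Set (I →₀ ZMod d × ZMod d)), Omega c t = 0) →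
      ∀ g ∈ commutant ((S : Set (I →₀ ZMod d × ZMod d)) ∩ Set.range π) ∩ Set.range π,
        Omega c g = 0 := by
  rintro c hc hcomm g ⟨hgB, -⟩
  have hcS : c ∈ (S : Set (I →₀ ZMod d × ZMod d)) :=
    hS ▸ mem_commutant_of_truncation_image hproj horth hc hcomm
  exact Omega_eq_zero_comm.mp (hgB c ⟨hcS, hc⟩)
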